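/- The graph G' is bipartite; in particular, the sets A' = {v, w} ∪ {S_1,...,S_n} ∪ Q and B' = {u_1, x} ∪ {S_1',...,S_n'} ∪ Q' form a bipartition of its vertex set with no edge inside A' and no edge inside B'. -/
import Mathlib


/-- Raw vertex names for the graph `G'`: `G(Q,S)` with `q*` and `u₂` deleted and a new
vertex `x` added (adjacent to `v` and `w`). -/
inductive HVertex' (m n : ℕ) : Type
  | elt : Fin m → HVertex' m n
  | hyp : Fin n → HVertex' m n
  | copy : Fin n → HVertex' m n
  | sub : Fin m → Fin n → HVertex' m n
  | u1 : HVertex' m n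
  | x : HVertex' m n
  | v : HVertex' m n
  | w : HVertex' m n

/-- A raw vertex name is an actual vertex of `G'`: the subdivision vertex `q^i_j`
exists only when `q_i ∈ S_j`. -/
def HVertex'.OK {m n : ℕ} (S : Fin n → Set (Fin m)) : HVertex' m n → Prop
  | .sub i j => i ∈ S j
  | _ => True

/-- The vertex set of `G'`. -/
def GVertex' {m n : ℕ} (S : Fin n → Set (Fin m)) : Type := {y : HVertex' m n // y.OK S}

/-- The (asymmetrically listed) edges of `G'`:
`q^i_j q_i`, `q^i_j S_j`, `q_i S_j'` (for `q_i ∈ S_j`), `S_j S_k'` (all `j,k`),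
`u₁ S_j`, `u₁ v`, `x v`, `x w`, `w S_j'`. -/
def baseAdj' {m n : ℕ} (S : Fin n → Set (Fin m)) : HVertex' m n → HVertex' m n → Prop
  | .sub i _, .elt i' => i = i'
  | .sub _ j, .hyp j' => j = j'
  | .elt i, .copy j => i ∈ S j
  | .hyp _, .copy _ => True
  | .u1, .hyp _ => True
  | .u1, .v => True
  | .x, .v => True
  | .x, .w => True
  | .w, .copy _ => True
  | _, _ => False

/-- The graph `G'`. -/
def GQS' {m n : ℕ} (S : Fin n → Set (Fin m)) : SimpleGraph (GVertex' S) :=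
  SimpleGraph.fromRel (fun a b => baseAdj' S a.1 b.1)

/-- The side `A' = {v, w} ∪ {S_1,...,S_n} ∪ Q` of the bipartition of `G'`;
its complement is `B' = {u₁, x} ∪ {S_1',...,S_n'} ∪ Q'`. -/
def inSideA' {m n : ℕ} : HVertex' m n → Prop
  | .v | .w | .hyp _ | .elt _ => True
  | _ => False


lemma baseAdj'_side {m n : ℕ} (S : Fin n → Set (Fin m)) {a b : HVertex' m n}
    (h : baseAdj' S a b) : inSideA' a ↔ ¬ inSideA' b := by
  cases a <;> cases b <;> simp_all [baseAdj', inSideA']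

theorem stmt_15 {m n : ℕ} (S : Fin n → Set (Fin m)) (hn : 2 ≤ n)
    (hSne : ∀ j, (S j).Nonempty) (hSlast : S ⟨n - 1, by omega⟩ = Set.univ) :
    (GQS' S).Colorable 2 ∧
      ∀ a b : GVertex' S, (GQS' S).Adj a b → (inSideA' a.1 ↔ ¬ inSideA' b.1) := by
  classical
  have key : ∀ a b : GVertex' S, (GQS' S).Adj a b → (inSideA' a.1 ↔ ¬ inSideA' b.1) := by
    intro a b hab
    obtain ⟨-, h | h⟩ := hab
    · exact baseAdj'_side S h
    · have := baseAdj'_side S h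
      tauto
  refine ⟨⟨fun a => if inSideA' a.1 then (0 : Fin 2) else 1, ?_⟩, key⟩
  intro a b hab
  have := key a b hab
  by_cases ha : inSideA' a.1 <;> by_cases hb : inSideA' b.1 <;> simp_all
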